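/- arXiv:math-ph/0508029 — 3 statements merged into one kernel-verified Lean document; each statement's English description precedes it below -/
import Mathlib

section
/- For every real number z with z < a or z > b, z is an eigenvalue of the operator h if and only if μ ∫_Q φ(t)² / (w(t) − z) dt = 1. -/
open MeasureTheory Real Filter Topology

noncomputable section

/-- Euclidean three-dimensional space. -/
abbrev E3 : Type := EuclideanSpace ℝ (Fin 3)

/-- The cube `Q = (-π, π]³` representing the torus `𝕋³`. -/
def Q3 : Set E3 := {p : E3 | ∀ i, p i ∈ Set.Ioc (-π) π}

/-- The `i`-th standard basis vector of `ℝ³`. -/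
def eV (i : Fin 3) : E3 := EuclideanSpace.single i (1 : ℝ)

/-- Lebesgue measure restricted to `Q`. -/
def μQ : Measure E3 := volume.restrict Q3

/-- The product measure on `Q × Q`. -/
def μQQ : Measure (E3 × E3) := μQ.prod μQ

abbrev Lc : Type := Lp ℂ 2 μQ

abbrev LQQ : Type := Lp ℂ 2 μQQ

/-!
Outside `[a, b]` the function `w - z` is bounded away from zero on `Q`. The eigenvalue equation
`(w - z) f = μ c φ` with `c = ∫ φ f` then forces every eigenvector to be `μ c φ / (w - z)` with
`c ≠ 0`, and pairing with `φ` gives `c = μ c ∫ φ² / (w - z)`. Conversely, `φ / (w - z)` lies in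
`L²`, and when `μ ∫ φ² / (w - z) = 1` it is a nonzero solution of the eigenvalue equation.
-/

section FriedrichsModel

variable {α : Type*} [MeasurableSpace α] {ν : Measure α}

def IsFriedrichsModel (w φ : α → ℝ) (μ : ℝ) (h : Lp ℂ 2 ν → Lp ℂ 2 ν) : Prop :=
  ∀ f : Lp ℂ 2 ν, (h f : α → ℂ) =ᵐ[ν] fun q =>
    (w q : ℂ) * f q - (μ : ℂ) * (φ q : ℂ) * ∫ t, (φ t : ℂ) * f t ∂ν

variable {w φ : α → ℝ} {μ z : ℝ} {h : Lp ℂ 2 ν → Lp ℂ 2 ν}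

theorem memLp_div_sub_of_le_abs_sub {δ : ℝ} (hw : AEMeasurable w ν) (hφ : MemLp φ 2 ν)
    (hδ : 0 < δ) (hgap : ∀ᵐ t ∂ν, δ ≤ |w t - z|) :
    MemLp (fun t => φ t / (w t - z)) 2 ν := by
  refine hφ.of_le_mul (c := δ⁻¹)
    (hφ.aestronglyMeasurable.aemeasurable.div (hw.sub_const z)).aestronglyMeasurable ?_
  filter_upwards [hgap] with t ht
  simp only [norm_div, Real.norm_eq_abs]
  rw [div_eq_inv_mul]
  gcongr

theorem integral_ofReal_mul_ofReal_div (φ g : α → ℝ) :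
    ∫ t, (φ t : ℂ) * ((φ t / g t : ℝ) : ℂ) ∂ν = ((∫ t, φ t ^ 2 / g t ∂ν : ℝ) : ℂ) := by
  rw [← integral_complex_ofReal]
  congr 1 with t
  push_cast
  ring

theorem toLp_ne_zero_of_integral_eq_one (hg : MemLp (fun t => ((φ t / (w t - z) : ℝ) : ℂ)) 2 ν)
    (hI : μ * ∫ t, φ t ^ 2 / (w t - z) ∂ν = 1) : hg.toLp _ ≠ 0 := by
  intro h0
  have hg0 := hg.coeFn_toLp.symm.trans (Lp.eq_zero_iff_ae_eq_zero.1 h0)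
  have hint : ∫ t, φ t ^ 2 / (w t - z) ∂ν = 0 := by
    refine integral_eq_zero_of_ae (hg0.mono fun q hq => ?_)
    have hq : φ q / (w q - z) = 0 := Complex.ofReal_eq_zero.1 hq
    simp only [Pi.zero_apply, pow_two, mul_div_assoc, hq, mul_zero]
  rw [hint, mul_zero] at hI
  exact zero_ne_one hI

namespace IsFriedrichsModel

theorem ae_eq_of_apply_eq_smul (hh : IsFriedrichsModel w φ μ h) (hne : ∀ᵐ t ∂ν, w t ≠ z)
    {f : Lp ℂ 2 ν} (hf : h f = (z : ℂ) • f) :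
    (f : α → ℂ) =ᵐ[ν] fun q =>
      (μ : ℂ) * (∫ t, (φ t : ℂ) * f t ∂ν) * ((φ q / (w q - z) : ℝ) : ℂ) := by
  filter_upwards [hh f, Lp.coeFn_smul (z : ℂ) f, hne] with q hq hsmul hqz
  rw [hf, hsmul, Pi.smul_apply, smul_eq_mul] at hq
  have hden : (w q : ℂ) - z ≠ 0 := sub_ne_zero.2 (by exact_mod_cast hqz)
  push_cast
  field_simp
  linear_combination -hq

theorem integral_eq_one_of_apply_eq_smul (hh : IsFriedrichsModel w φ μ h)
    (hne : ∀ᵐ t ∂ν, w t ≠ z) {f : Lp ℂ 2 ν} (hf0 : f ≠ 0) (hf : h f = (z : ℂ) • f) :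
    μ * ∫ t, φ t ^ 2 / (w t - z) ∂ν = 1 := by
  have hform := hh.ae_eq_of_apply_eq_smul hne hf
  set c : ℂ := ∫ t, (φ t : ℂ) * f t ∂ν
  have hc0 : c ≠ 0 := by
    intro hc0
    refine hf0 (Lp.eq_zero_iff_ae_eq_zero.2 ?_)
    filter_upwards [hform] with q hq
    simp [hq, hc0]
  have hc : c = (μ : ℂ) * c * ((∫ t, φ t ^ 2 / (w t - z) ∂ν : ℝ) : ℂ) := by
    calc c = ∫ t, (μ : ℂ) * c * ((φ t : ℂ) * ((φ t / (w t - z) : ℝ) : ℂ)) ∂ν := by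
          refine integral_congr_ae ?_
          filter_upwards [hform] with q hq
          rw [hq]
          ring
      _ = _ := by rw [integral_const_mul, integral_ofReal_mul_ofReal_div]
  have hcast : ((μ * ∫ t, φ t ^ 2 / (w t - z) ∂ν : ℝ) : ℂ) = 1 := by
    push_cast
    exact mul_left_cancel₀ hc0 (by linear_combination -hc)
  exact_mod_cast hcast

theorem apply_toLp_eq_smul (hh : IsFriedrichsModel w φ μ h) (hne : ∀ᵐ t ∂ν, w t ≠ z)
    (hg : MemLp (fun t => ((φ t / (w t - z) : ℝ) : ℂ)) 2 ν)
    (hI : μ * ∫ t, φ t ^ 2 / (w t - z) ∂ν = 1) :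
    h (hg.toLp _) = (z : ℂ) • hg.toLp _ := by
  have hpair : (μ : ℂ) * ∫ t, (φ t : ℂ) * (hg.toLp _ : α → ℂ) t ∂ν = 1 := by
    rw [integral_congr_ae (hg.coeFn_toLp.mono fun q hq => by rw [hq]),
      integral_ofReal_mul_ofReal_div]
    exact_mod_cast hI
  apply Lp.ext
  filter_upwards [hh (hg.toLp _), hg.coeFn_toLp, Lp.coeFn_smul (z : ℂ) (hg.toLp _), hne]
    with q hq hqg hsmul hqz
  have hden : (w q : ℂ) - z ≠ 0 := sub_ne_zero.2 (by exact_mod_cast hqz)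
  rw [hq, hsmul, Pi.smul_apply, smul_eq_mul, mul_assoc _ (φ q : ℂ), mul_left_comm _ (φ q : ℂ),
    hpair, hqg]
  push_cast
  field_simp
  ring

theorem exists_eigenvector_iff (hh : IsFriedrichsModel w φ μ h) {δ : ℝ} (hw : AEMeasurable w ν)
    (hφ : MemLp φ 2 ν) (hδ : 0 < δ) (hgap : ∀ᵐ t ∂ν, δ ≤ |w t - z|) :
    (∃ f : Lp ℂ 2 ν, f ≠ 0 ∧ h f = (z : ℂ) • f) ↔ μ * ∫ t, φ t ^ 2 / (w t - z) ∂ν = 1 := by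
  have hne : ∀ᵐ t ∂ν, w t ≠ z := hgap.mono fun t ht hwz => by
    rw [hwz, sub_self, abs_zero] at ht
    exact hδ.not_ge ht
  refine ⟨fun ⟨f, hf0, hf⟩ => hh.integral_eq_one_of_apply_eq_smul hne hf0 hf, fun hI => ?_⟩
  have hg := (memLp_div_sub_of_le_abs_sub hw hφ hδ hgap).ofReal (K := ℂ)
  exact ⟨_, toLp_ne_zero_of_integral_eq_one hg hI, hh.apply_toLp_eq_smul hne hg hI⟩

end IsFriedrichsModel

end FriedrichsModel

theorem exists_pos_le_abs_sub_of_lt_sInf_or_sSup_lt {β : Type*} {s : Set β} {w : β → ℝ} {z : ℝ}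
    (hbelow : BddBelow (w '' s)) (habove : BddAbove (w '' s))
    (hz : z < sInf (w '' s) ∨ sSup (w '' s) < z) : ∃ δ > 0, ∀ t ∈ s, δ ≤ |w t - z| := by
  rcases hz with hz | hz
  · refine ⟨sInf (w '' s) - z, sub_pos.2 hz, fun t ht => ?_⟩
    have := csInf_le hbelow (Set.mem_image_of_mem w ht)
    exact le_abs.2 (.inl (by linarith))
  · refine ⟨z - sSup (w '' s), sub_pos.2 hz, fun t ht => ?_⟩
    have := le_csSup habove (Set.mem_image_of_mem w ht)
    exact le_abs.2 (.inr (by linarith))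

theorem measurableSet_Q3 : MeasurableSet Q3 := by
  simp only [Q3, Set.ofPred_forall]
  exact .iInter fun i => (EuclideanSpace.proj i).continuous.measurable measurableSet_Ioc

theorem isBounded_Q3 : Bornology.IsBounded Q3 := by
  have hK : IsCompact ((EuclideanSpace.equiv (Fin 3) ℝ) ⁻¹' Set.univ.pi fun _ => Set.Icc (-π) π) :=
    (EuclideanSpace.equiv (Fin 3) ℝ).toHomeomorph.isCompact_preimage.2
      (isCompact_univ_pi fun _ => isCompact_Icc)
  exact hK.isBounded.subset fun p hp i _ => Set.Ioc_subset_Icc_self (hp i)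

theorem friedrichs_eigenvalue_iff_fredholm_determinant_zero_general
    (w : E3 → ℝ) (φ : E3 → ℝ) (μ : ℝ)
    (hw_cont : Continuous w)
    (hφL2 : MemLp φ 2 μQ)
    (h : Lc →L[ℂ] Lc)
    (hh : ∀ f : Lc, (h f : E3 → ℂ) =ᵐ[μQ] fun q =>
      (w q : ℂ) * f q - (μ : ℂ) * (φ q : ℂ) * ∫ t in Q3, (φ t : ℂ) * f t)
    (z : ℝ) (hz : z < sInf (w '' Q3) ∨ sSup (w '' Q3) < z) :
    (∃ f : Lc, f ≠ 0 ∧ h f = (z : ℂ) • f) ↔ μ * ∫ t in Q3, φ t ^ 2 / (w t - z) = 1 := by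
  have hK : IsCompact (w '' closure Q3) := isBounded_Q3.isCompact_closure.image hw_cont
  have himage : w '' Q3 ⊆ w '' closure Q3 := Set.image_mono subset_closure
  obtain ⟨δ, hδ, hgap⟩ :=
    exists_pos_le_abs_sub_of_lt_sInf_or_sSup_lt (hK.bddBelow.mono himage) (hK.bddAbove.mono himage) hz
  exact IsFriedrichsModel.exists_eigenvector_iff hh hw_cont.aemeasurable hφL2 hδ
    (ae_restrict_of_forall_mem measurableSet_Q3 hgap)

/-- For `z` outside `[min_Q w, max_Q w]`, `z` is an eigenvalue of the Friedrichs model `h`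
iff `μ ∫_Q φ(t)²/(w(t) - z) dt = 1`. -/
theorem friedrichs_eigenvalue_iff_fredholm_determinant_zero
    (w : E3 → ℝ) (φ : E3 → ℝ) (μ : ℝ)
    (hw_cont : Continuous w)
    (hw_per : ∀ (p : E3) (i : Fin 3), w (p + (2 * π) • eV i) = w p)
    (hφ_per : ∀ (p : E3) (i : Fin 3), φ (p + (2 * π) • eV i) = φ p)
    (hφL2 : MemLp φ 2 μQ)
    (hμpos : 0 < μ)
    (h : Lc →L[ℂ] Lc) (hsa : IsSelfAdjoint h)
    (hh : ∀ f : Lc, (h f : E3 → ℂ) =ᵐ[μQ] fun q =>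
      (w q : ℂ) * f q - (μ : ℂ) * (φ q : ℂ) * ∫ t in Q3, (φ t : ℂ) * f t)
    (z : ℝ) (hz : z < sInf (w '' Q3) ∨ sSup (w '' Q3) < z) :
    (∃ f : Lc, f ≠ 0 ∧ h f = (z : ℂ) • f) ↔ μ * ∫ t in Q3, φ t ^ 2 / (w t - z) = 1 :=
  friedrichs_eigenvalue_iff_fredholm_determinant_zero_general w φ μ hw_cont hφL2 h hh z hz
end
end

section
/- Assume Hypotheses 1, 2 and 3 and let μ_α = μ_α⁰ for α = 1, 2. Then for every α ∈ {1,2}, every p ∈ Q and every real z < m, z is not an eigenvalue of the Friedrichs model h_{μ_α⁰}(p). -/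
/-!
An eigenvector `f` of `h_μ(p)` for an eigenvalue `z < m` is forced to be `μ c φ / (u_p - z)` with
`c = ∫ φ f`, and `μ c ≠ 0` since `f ≠ 0`; integrating `φ f` then gives `μ Λ(p, z) = 1`, so for
`μ = μ⁰` we would have `Λ(p, z) = Λ(0, m)`. This is impossible: for `p ≠ 0` the minimum of `u_p`
over the torus exceeds `m`, so `Λ(p, ·)` is a genuine integral up to `m` and
`Λ(p, z) ≤ Λ(p, m) < Λ(0, m)` by Hypothesis 3; for `p = 0`, `Λ(0, m) ≠ 0` means `φ` does not vanish
a.e., which makes `Λ(0, z) < Λ(0, m)` strict.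
-/

open MeasureTheory Real Filter Topology

noncomputable section

/-- `Λ₁(p, z) = ∫_Q φ(t)² / (u(t,p) - z) dt`. -/
def Lam1 (u : E3 × E3 → ℝ) (φ : E3 → ℝ) (p : E3) (z : ℝ) : ℝ :=
  ∫ t in Q3, φ t ^ 2 / (u (t, p) - z)

/-- `Λ₂(p, z) = ∫_Q φ(t)² / (u(p,t) - z) dt`. -/
def Lam2 (u : E3 × E3 → ℝ) (φ : E3 → ℝ) (p : E3) (z : ℝ) : ℝ :=
  ∫ t in Q3, φ t ^ 2 / (u (p, t) - z)

namespace FriedrichsModel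

def cubeIcc : Set E3 := {p : E3 | ∀ i, p i ∈ Set.Icc (-π) π}

lemma Q3_subset_cubeIcc : Q3 ⊆ cubeIcc := fun _ hp i => Set.Ioc_subset_Icc_self (hp i)

lemma zero_mem_Q3 : (0 : E3) ∈ Q3 := fun _ => ⟨by simp [pi_pos], by simp [pi_pos.le]⟩

lemma isCompact_cubeIcc : IsCompact cubeIcc := by
  have h : cubeIcc = EuclideanSpace.equiv (Fin 3) ℝ ⁻¹' Set.univ.pi fun _ => Set.Icc (-π) π := by
    ext p; simp only [cubeIcc, Set.mem_preimage, Set.mem_univ_pi]; rfl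
  rw [h]
  exact (EuclideanSpace.equiv (Fin 3) ℝ).toHomeomorph.isCompact_preimage.2
    (isCompact_univ_pi fun _ => isCompact_Icc)

lemma measurableSet_Q3 : MeasurableSet Q3 := by
  have h : Q3 = EuclideanSpace.equiv (Fin 3) ℝ ⁻¹' Set.univ.pi fun _ => Set.Ioc (-π) π := by
    ext p; simp [Q3]
  rw [h]
  exact (EuclideanSpace.equiv (Fin 3) ℝ).continuous.measurable
    (MeasurableSet.univ_pi fun _ => measurableSet_Ioc)

instance : IsFiniteMeasure μQ :=
  isFiniteMeasure_restrict.2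
    ((measure_mono Q3_subset_cubeIcc).trans_lt isCompact_cubeIcc.measure_lt_top).ne

section Periodic

variable {f : E3 → ℝ}

lemma apply_add_sum_two_pi_smul_eV (hper : ∀ x i, f (x + (2 * π) • eV i) = f x)
    (S : Finset (Fin 3)) (x : E3) :
    f (x + ∑ j ∈ S, (2 * π) • eV j) = f x := by
  induction S using Finset.induction_on generalizing x with
  | empty => simp
  | insert j S hj ih => rw [Finset.sum_insert hj, ← add_assoc, ih, hper]

lemma exists_mem_Q3_apply_eq (hper : ∀ x i, f (x + (2 * π) • eV i) = f x) {t : E3}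
    (ht : t ∈ cubeIcc) : ∃ t' ∈ Q3, f t' = f t := by
  classical
  refine ⟨_, fun i => ?_, apply_add_sum_two_pi_smul_eV hper {i | t i = -π} t⟩
  have hi : (t + ∑ j ∈ {i | t i = -π}, (2 * π) • eV j) i =
      t i + if t i = -π then 2 * π else 0 := by
    simp [eV, Finset.sum_apply, Pi.single_apply]
  rw [hi]
  split_ifs with h
  · constructor <;> linarith [pi_pos]
  · rw [add_zero]
    exact ⟨(ht i).1.lt_of_ne' h, (ht i).2⟩

/-- `Q3` is not compact; periodicity brings the minimum over its closure back into `Q3`. -/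
lemma exists_pos_add_le_of_forall_lt (hper : ∀ x i, f (x + (2 * π) • eV i) = f x)
    (hf : Continuous f) {c : ℝ} (hc : ∀ t ∈ Q3, c < f t) :
    ∃ ε > 0, ∀ t ∈ Q3, c + ε ≤ f t := by
  obtain ⟨t₀, ht₀, hmin⟩ := isCompact_cubeIcc.exists_isMinOn
    ⟨0, Q3_subset_cubeIcc zero_mem_Q3⟩ hf.continuousOn
  obtain ⟨t₁, ht₁, heq⟩ := exists_mem_Q3_apply_eq hper ht₀
  exact ⟨f t₀ - c, by linarith [hc t₁ ht₁],
    fun t ht => by linarith [isMinOn_iff.1 hmin t (Q3_subset_cubeIcc ht)]⟩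

end Periodic

lemma integrable_sq_div_sub {φ a : E3 → ℝ} (hφ : Continuous φ) (ha : Continuous a) {z ε : ℝ}
    (hε : 0 < ε) (hgap : ∀ t ∈ Q3, ε ≤ a t - z) :
    Integrable (fun t => φ t ^ 2 / (a t - z)) μQ := by
  obtain ⟨C, hC⟩ := isCompact_cubeIcc.exists_bound_of_continuousOn (hφ.pow 2).continuousOn
  refine Integrable.of_bound
    ((hφ.measurable.pow_const 2).div (ha.measurable.sub_const z)).aestronglyMeasurable (C / ε) ?_
  filter_upwards [ae_restrict_mem measurableSet_Q3] with t ht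
  rw [norm_div]
  exact div_le_div₀ ((norm_nonneg _).trans (hC t (Q3_subset_cubeIcc ht)))
    (hC t (Q3_subset_cubeIcc ht)) hε ((hgap t ht).trans (le_abs_self _))

lemma integral_div_sub_lt_of_lt {α : Type*} [MeasurableSpace α] {ν : Measure α} {g d : α → ℝ}
    {z m : ℝ} (hzm : z < m) (hg : ∀ t, 0 ≤ g t) (hd : ∀ᵐ t ∂ν, m < d t)
    (hiz : Integrable (fun t => g t / (d t - z)) ν) (hne : ∫ t, g t / (d t - m) ∂ν ≠ 0) :
    ∫ t, g t / (d t - z) ∂ν < ∫ t, g t / (d t - m) ∂ν := by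
  have him : Integrable (fun t => g t / (d t - m)) ν := by
    by_contra hi
    exact hne (integral_undef hi)
  have hle : (fun t => g t / (d t - z)) ≤ᵐ[ν] fun t => g t / (d t - m) := by
    filter_upwards [hd] with t ht
    exact div_le_div_of_nonneg_left (hg t) (by linarith) (by linarith)
  refine (integral_mono_ae hiz him hle).lt_of_ne fun heq => hne ?_
  have hdiff : (fun t => g t / (d t - m) - g t / (d t - z)) =ᵐ[ν] 0 := by
    refine (integral_eq_zero_iff_of_nonneg_ae ?_ (him.sub hiz)).1 ?_
    · filter_upwards [hle] with t ht
      exact sub_nonneg.2 ht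
    · simp only [Pi.sub_apply]
      rw [integral_sub him hiz, heq, sub_self]
  rw [integral_eq_zero_of_ae]
  filter_upwards [hdiff, hd] with t ht hdt
  rcases (hg t).eq_or_lt with h0 | hpos
  · simp [← h0]
  · exact absurd ht (sub_ne_zero.2 (div_lt_div_of_pos_left hpos (by linarith) (by linarith)).ne')

theorem mul_integral_sq_div_eq_one_of_eigenvector {α : Type*} [MeasurableSpace α]
    {ν : Measure α} {a φ : α → ℝ} {μ z : ℝ} {h : Lp ℂ 2 ν →L[ℂ] Lp ℂ 2 ν}
    (hh : ∀ f : Lp ℂ 2 ν, (h f : α → ℂ) =ᵐ[ν] fun q =>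
      (a q : ℂ) * f q - (μ : ℂ) * (φ q : ℂ) * ∫ t, (φ t : ℂ) * f t ∂ν)
    (hz : ∀ᵐ q ∂ν, a q ≠ z) {f : Lp ℂ 2 ν} (hf0 : f ≠ 0) (hfz : h f = (z : ℂ) • f) :
    μ * ∫ t, φ t ^ 2 / (a t - z) ∂ν = 1 := by
  set c := ∫ t, (φ t : ℂ) * f t ∂ν
  have hrep : (f : α → ℂ) =ᵐ[ν] fun q => (μ * c : ℂ) * ((φ q / (a q - z) : ℝ) : ℂ) := by
    have hsmul := Lp.coeFn_smul (z : ℂ) f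
    rw [← hfz] at hsmul
    filter_upwards [hh f, hsmul, hz] with q hq hzq haq
    have hne : (a q : ℂ) - z ≠ 0 := by exact_mod_cast sub_ne_zero.2 haq
    rw [hzq, Pi.smul_apply, smul_eq_mul] at hq
    push_cast
    field_simp
    linear_combination -hq
  have hμc : (μ * c : ℂ) ≠ 0 := by
    intro h0
    apply hf0
    rw [Lp.eq_zero_iff_ae_eq_zero]
    filter_upwards [hrep] with q hq
    simp [hq, h0]
  have hc : c = (μ * c : ℂ) * ((∫ t, φ t ^ 2 / (a t - z) ∂ν : ℝ) : ℂ) := by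
    calc c = ∫ t, (μ * c : ℂ) * ((φ t ^ 2 / (a t - z) : ℝ) : ℂ) ∂ν := by
          refine integral_congr_ae ?_
          filter_upwards [hrep] with t ht
          rw [ht]
          push_cast
          ring
      _ = _ := by rw [integral_const_mul, integral_complex_ofReal]
  have hone : ((μ * ∫ t, φ t ^ 2 / (a t - z) ∂ν : ℝ) : ℂ) = 1 := by
    apply mul_left_cancel₀ (right_ne_zero_of_mul hμc)
    push_cast
    linear_combination -hc
  exact_mod_cast hone

section Fiber

variable (v : E3 → E3 → ℝ) (φ : E3 → ℝ) (m : ℝ)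

theorem integral_sq_div_lt_threshold (hv : ∀ p, Continuous (v p)) (hφ : Continuous φ)
    (hper : ∀ p x i, v p (x + (2 * π) • eV i) = v p x)
    (hmin : ∀ p ∈ Q3, ∀ t ∈ Q3, m ≤ v p t)
    (huniq : ∀ p ∈ Q3, ∀ t ∈ Q3, v p t = m → p = 0 ∧ t = 0)
    (hmax : ∀ p ∈ Q3, p ≠ 0 →
      ∫ t in Q3, φ t ^ 2 / (v p t - m) < ∫ t in Q3, φ t ^ 2 / (v 0 t - m))
    {p : E3} (hp : p ∈ Q3) {z : ℝ} (hz : z < m)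
    (hne : ∫ t in Q3, φ t ^ 2 / (v 0 t - m) ≠ 0) :
    ∫ t in Q3, φ t ^ 2 / (v p t - z) < ∫ t in Q3, φ t ^ 2 / (v 0 t - m) := by
  have hIz : Integrable (fun t => φ t ^ 2 / (v p t - z)) μQ :=
    integrable_sq_div_sub hφ (hv p) (sub_pos.2 hz) fun t ht => by linarith [hmin p hp t ht]
  by_cases hp0 : p = 0
  · subst hp0
    refine integral_div_sub_lt_of_lt hz (fun t => sq_nonneg _) ?_ hIz hne
    filter_upwards [ae_restrict_mem measurableSet_Q3,
      ae_restrict_of_ae (Measure.ae_ne volume 0)] with t ht ht0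
    exact (hmin 0 zero_mem_Q3 t ht).lt_of_ne fun h => ht0 (huniq 0 zero_mem_Q3 t ht h.symm).2
  · obtain ⟨ε, hε, hgap⟩ := exists_pos_add_le_of_forall_lt (hper p) (hv p) (c := m)
      fun t ht => (hmin p hp t ht).lt_of_ne fun h => hp0 (huniq p hp t ht h.symm).1
    have hIm : Integrable (fun t => φ t ^ 2 / (v p t - m)) μQ :=
      integrable_sq_div_sub hφ (hv p) hε fun t ht => by linarith [hgap t ht]
    calc ∫ t in Q3, φ t ^ 2 / (v p t - z) ≤ ∫ t in Q3, φ t ^ 2 / (v p t - m) := by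
          refine integral_mono_of_nonneg ?_ hIm ?_ <;>
            filter_upwards [ae_restrict_mem measurableSet_Q3] with t ht
          · exact div_nonneg (sq_nonneg _) (by linarith [hmin p hp t ht])
          · exact div_le_div_of_nonneg_left (sq_nonneg _) (by linarith [hgap t ht])
              (by linarith)
      _ < _ := hmax p hp hp0

theorem not_exists_eigenvector_below_threshold (hv : ∀ p, Continuous (v p))
    (hφ : Continuous φ) (hper : ∀ p x i, v p (x + (2 * π) • eV i) = v p x)
    (hmin : ∀ p ∈ Q3, ∀ t ∈ Q3, m ≤ v p t)
    (huniq : ∀ p ∈ Q3, ∀ t ∈ Q3, v p t = m → p = 0 ∧ t = 0)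
    (hmax : ∀ p ∈ Q3, p ≠ 0 →
      ∫ t in Q3, φ t ^ 2 / (v p t - m) < ∫ t in Q3, φ t ^ 2 / (v 0 t - m))
    {μ : ℝ} (hμ : μ = (∫ t in Q3, φ t ^ 2 / (v 0 t - m))⁻¹)
    {p : E3} (hp : p ∈ Q3) {h : Lc →L[ℂ] Lc}
    (hh : ∀ f : Lc, (h f : E3 → ℂ) =ᵐ[μQ] fun q =>
      (v p q : ℂ) * f q - (μ : ℂ) * (φ q : ℂ) * ∫ t in Q3, (φ t : ℂ) * f t)
    {z : ℝ} (hz : z < m) : ¬ ∃ f : Lc, f ≠ 0 ∧ h f = (z : ℂ) • f := by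
  rintro ⟨f, hf0, hfz⟩
  have hone := mul_integral_sq_div_eq_one_of_eigenvector hh ?_ hf0 hfz
  · have hne : ∫ t in Q3, φ t ^ 2 / (v 0 t - m) ≠ 0 := fun h0 => by simp [hμ, h0] at hone
    rw [hμ, inv_mul_eq_one₀ hne] at hone
    exact (integral_sq_div_lt_threshold v φ m hv hφ hper hmin huniq hmax hp hz hne).ne' hone
  · filter_upwards [ae_restrict_mem measurableSet_Q3] with q hq
    exact (hz.trans_le (hmin p hp q hq)).ne'

end Fiber

end FriedrichsModel

open FriedrichsModel in
theorem friedrichs_model_no_eigenvalue_below_threshold_general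
    (u : E3 × E3 → ℝ) (m : ℝ)
    (φ₁ φ₂ : E3 → ℝ)
    -- Hypothesis 1
    (hu_cont : Continuous u)
    (hu_per : ∀ (x : E3 × E3) (i : Fin 3),
      u (x.1 + (2 * π) • eV i, x.2) = u x ∧ u (x.1, x.2 + (2 * π) • eV i) = u x)
    (hm_min : ∀ x ∈ Q3 ×ˢ Q3, m ≤ u x)
    (hm_uniq : ∀ x ∈ Q3 ×ˢ Q3, u x = m → x = (0, 0))
    -- Hypothesis 2 for `φ₁`
    (hφ₁_smooth : ContDiff ℝ 2 φ₁)
    -- Hypothesis 2 for `φ₂`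
    (hφ₂_smooth : ContDiff ℝ 2 φ₂)
    -- Hypothesis 3
    (hΛ₁max : ∀ p ∈ Q3, p ≠ 0 → Lam1 u φ₁ p m < Lam1 u φ₁ 0 m)
    (hΛ₂max : ∀ p ∈ Q3, p ≠ 0 → Lam2 u φ₂ p m < Lam2 u φ₂ 0 m)
    -- `μ_α = μ_α⁰`
    (μ₁ μ₂ : ℝ)
    (hμ₁ : μ₁ = (Lam1 u φ₁ 0 m)⁻¹) (hμ₂ : μ₂ = (Lam2 u φ₂ 0 m)⁻¹)
    :
    (∀ p ∈ Q3, ∀ h : Lc →L[ℂ] Lc,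
      (∀ f : Lc, (h f : E3 → ℂ) =ᵐ[μQ] fun q =>
        (u (q, p) : ℂ) * f q - (μ₁ : ℂ) * (φ₁ q : ℂ) * ∫ t in Q3, (φ₁ t : ℂ) * f t) →
      ∀ z : ℝ, z < m → ¬ ∃ f : Lc, f ≠ 0 ∧ h f = (z : ℂ) • f) ∧
    (∀ p ∈ Q3, ∀ h : Lc →L[ℂ] Lc,
      (∀ f : Lc, (h f : E3 → ℂ) =ᵐ[μQ] fun q =>
        (u (p, q) : ℂ) * f q - (μ₂ : ℂ) * (φ₂ q : ℂ) * ∫ t in Q3, (φ₂ t : ℂ) * f t) →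
      ∀ z : ℝ, z < m → ¬ ∃ f : Lc, f ≠ 0 ∧ h f = (z : ℂ) • f) := by
  constructor
  · intro p hp h hh z hz
    exact not_exists_eigenvector_below_threshold (fun p t => u (t, p)) φ₁ m (by fun_prop)
      hφ₁_smooth.continuous (fun p x i => (hu_per (x, p) i).1)
      (fun p hp t ht => hm_min (t, p) ⟨ht, hp⟩)
      (fun p hp t ht he => (Prod.ext_iff.1 (hm_uniq (t, p) ⟨ht, hp⟩ he)).symm)
      hΛ₁max hμ₁ hp hh hz
  · intro p hp h hh z hz
    exact not_exists_eigenvector_below_threshold (fun p t => u (p, t)) φ₂ m (by fun_prop)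
      hφ₂_smooth.continuous (fun p x i => (hu_per (p, x) i).2)
      (fun p hp t ht => hm_min (p, t) ⟨hp, ht⟩)
      (fun p hp t ht he => Prod.ext_iff.1 (hm_uniq (p, t) ⟨hp, ht⟩ he))
      hΛ₂max hμ₂ hp hh hz

/-- Under Hypotheses 1–3 with `μ_α = μ_α⁰`, the Friedrichs models `h_{μ_α⁰}(p)`, `p ∈ Q`,
have no eigenvalues below `m`. -/
theorem friedrichs_model_no_eigenvalue_below_threshold
    (u : E3 × E3 → ℝ) (m : ℝ) (U : Matrix (Fin 3) (Fin 3) ℝ) (l₁ l₂ l : ℝ) (θ : NNReal)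
    (φ₁ φ₂ : E3 → ℝ)
    -- Hypothesis 1
    (hu_cont : Continuous u)
    (hu_per : ∀ (x : E3 × E3) (i : Fin 3),
      u (x.1 + (2 * π) • eV i, x.2) = u x ∧ u (x.1, x.2 + (2 * π) • eV i) = u x)
    (hu_even : ∀ x : E3 × E3, u (-x.1, -x.2) = u x)
    (hu_smooth : ContDiff ℝ 3 u)
    (hθ : (1 / 2 : NNReal) < θ ∧ θ ≤ 1)
    (hu_holder : ∃ C : NNReal, HolderWith C θ (iteratedFDeriv ℝ 3 u))
    (hm_min : ∀ x ∈ Q3 ×ˢ Q3, m ≤ u x)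
    (hm_eq : u (0, 0) = m)
    (hm_uniq : ∀ x ∈ Q3 ×ˢ Q3, u x = m → x = (0, 0))
    (hU : U.PosDef) (hl₁ : 0 < l₁) (hl₂ : 0 < l₂) (hl : l ≠ 0)
    (hnd : ∀ v : E3 × E3, v ≠ 0 → 0 < fderiv ℝ (fderiv ℝ u) (0, 0) v v)
    (hHpp : ∀ i j : Fin 3,
      fderiv ℝ (fderiv ℝ u) (0, 0) (eV i, 0) (eV j, 0) = l₁ * U i j)
    (hHpq : ∀ i j : Fin 3,
      fderiv ℝ (fderiv ℝ u) (0, 0) (eV i, 0) ((0 : E3), eV j) = l * U i j)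
    (hHqq : ∀ i j : Fin 3,
      fderiv ℝ (fderiv ℝ u) (0, 0) ((0 : E3), eV i) ((0 : E3), eV j) = l₂ * U i j)
    -- Hypothesis 2 for `φ₁`
    (hφ₁_per : ∀ (p : E3) (i : Fin 3), φ₁ (p + (2 * π) • eV i) = φ₁ p)
    (hφ₁_smooth : ContDiff ℝ 2 φ₁)
    (hφ₁_parity : (∀ p, φ₁ (-p) = φ₁ p) ∨ (∀ p, φ₁ (-p) = -φ₁ p))
    -- Hypothesis 2 for `φ₂`
    (hφ₂_per : ∀ (p : E3) (i : Fin 3), φ₂ (p + (2 * π) • eV i) = φ₂ p)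
    (hφ₂_smooth : ContDiff ℝ 2 φ₂)
    (hφ₂_parity : (∀ p, φ₂ (-p) = φ₂ p) ∨ (∀ p, φ₂ (-p) = -φ₂ p))
    -- Hypothesis 3
    (hΛ₁max : ∀ p ∈ Q3, p ≠ 0 → Lam1 u φ₁ p m < Lam1 u φ₁ 0 m)
    (hΛ₁quad : ∃ c > (0 : ℝ), ∃ δ > (0 : ℝ), ∀ p : E3, 0 < ‖p‖ → ‖p‖ < δ →
      c * ‖p‖ ^ 2 < Lam1 u φ₁ 0 m - Lam1 u φ₁ p m)
    (hΛ₂max : ∀ p ∈ Q3, p ≠ 0 → Lam2 u φ₂ p m < Lam2 u φ₂ 0 m)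
    (hΛ₂quad : ∃ c > (0 : ℝ), ∃ δ > (0 : ℝ), ∀ p : E3, 0 < ‖p‖ → ‖p‖ < δ →
      c * ‖p‖ ^ 2 < Lam2 u φ₂ 0 m - Lam2 u φ₂ p m)
    -- `μ_α = μ_α⁰`
    (μ₁ μ₂ : ℝ) (hμ₁pos : 0 < μ₁) (hμ₂pos : 0 < μ₂)
    (hμ₁ : μ₁ = (Lam1 u φ₁ 0 m)⁻¹) (hμ₂ : μ₂ = (Lam2 u φ₂ 0 m)⁻¹)
    :
    (∀ p ∈ Q3, ∀ h : Lc →L[ℂ] Lc,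
      (∀ f : Lc, (h f : E3 → ℂ) =ᵐ[μQ] fun q =>
        (u (q, p) : ℂ) * f q - (μ₁ : ℂ) * (φ₁ q : ℂ) * ∫ t in Q3, (φ₁ t : ℂ) * f t) →
      ∀ z : ℝ, z < m → ¬ ∃ f : Lc, f ≠ 0 ∧ h f = (z : ℂ) • f) ∧
    (∀ p ∈ Q3, ∀ h : Lc →L[ℂ] Lc,
      (∀ f : Lc, (h f : E3 → ℂ) =ᵐ[μQ] fun q =>
        (u (p, q) : ℂ) * f q - (μ₂ : ℂ) * (φ₂ q : ℂ) * ∫ t in Q3, (φ₂ t : ℂ) * f t) →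
      ∀ z : ℝ, z < m → ¬ ∃ f : Lc, f ≠ 0 ∧ h f = (z : ℂ) • f) :=
  friedrichs_model_no_eigenvalue_below_threshold_general u m φ₁ φ₂ hu_cont hu_per hm_min hm_uniq
    hφ₁_smooth hφ₂_smooth hΛ₁max hΛ₂max μ₁ μ₂ hμ₁ hμ₂
end
end

section
/- Let 𝓗 be a complex Hilbert space, m ∈ ℝ, and let A₀ : (−∞, m) → B(𝓗) and A₁ : (−∞, m] → B(𝓗) be families of compact self-adjoint operators such that z ↦ A₀(z) is norm-continuous on (−∞, m) and z ↦ A₁(z) is norm-continuous on (−∞, m]. Let f : (−∞, m) → (0, ∞) satisfy f(z) → 0 as z → m⁻, and let l : (0, ∞) → ℝ be continuous. Assume that for every λ > 0 one has f(z) · n(λ, A₀(z)) → l(λ) as z → m⁻. Then for every λ > 0, f(z) · n(λ, A₀(z) + A₁(z)) → l(λ) as z → m⁻. -/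
open MeasureTheory Real Filter Topology

noncomputable section

/-- `n(λ, B)`: the supremum of `dim F` over finite-dimensional subspaces `F` such that
`⟨Bf, f⟩ > λ ‖f‖²` for every nonzero `f ∈ F`. -/
def ncount {H : Type*} [NormedAddCommGroup H] [InnerProductSpace ℂ H]
    (lam : ℝ) (B : H →L[ℂ] H) : ℕ :=
  sSup {k : ℕ | ∃ F : Submodule ℂ H, Module.finrank ℂ F = k ∧
    ∀ f ∈ F, f ≠ 0 → lam * ‖f‖ ^ 2 < (inner ℂ (B f) f : ℂ).re}

/-!
Compactness of `A₁ m` gives a finite-dimensional `V` with `|⟨A₁ m f, f⟩| ≤ ε/2 ‖f‖²` on `Vᗮ`,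
and norm continuity at `m` turns this into `|⟨A₁ z f, f⟩| ≤ ε ‖f‖²` on `Vᗮ` for `z` near `m`.
Cutting a test subspace `F` down to `F ⊓ Vᗮ` costs at most `dim V` dimensions, so
`n(λ + ε, A₀ z) - dim V ≤ n(λ, A₀ z + A₁ z) ≤ n(λ - ε, A₀ z) + dim V`.
After multiplying by `f z → 0` the constant `dim V` disappears, and continuity of `l` at `λ`
lets `ε → 0`.
-/

section

variable {𝕜 E : Type*} [RCLike 𝕜] [NormedAddCommGroup E] [InnerProductSpace 𝕜 E]

theorem Submodule.finrank_le_finrank_inf_orthogonal_add (F V : Submodule 𝕜 E)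
    [FiniteDimensional 𝕜 V] :
    Module.finrank 𝕜 F ≤ Module.finrank 𝕜 ↥(F ⊓ Vᗮ) + Module.finrank 𝕜 V := by
  by_cases hF : FiniteDimensional 𝕜 F
  swap
  · simp [Module.finrank_of_not_finite hF]
  let φ : F →ₗ[𝕜] V := V.orthogonalProjectionOnto.toLinearMap ∘ₗ F.subtype
  have hker : LinearMap.ker φ = (F ⊓ Vᗮ).comap F.subtype := by
    ext x
    simp [φ]
  calc Module.finrank 𝕜 F
      = Module.finrank 𝕜 (LinearMap.range φ) + Module.finrank 𝕜 (LinearMap.ker φ) :=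
        (φ.finrank_range_add_finrank_ker).symm
    _ ≤ Module.finrank 𝕜 V + Module.finrank 𝕜 ↥(F ⊓ Vᗮ) := by
        rw [hker, (Submodule.comapSubtypeEquivOfLe inf_le_left).finrank_eq]
        exact Nat.add_le_add_right (Submodule.finrank_le _) _
    _ = _ := Nat.add_comm _ _

theorem norm_inner_apply_self_le_add (S T : E →L[𝕜] E) (f : E) :
    ‖(inner 𝕜 (T f) f : 𝕜)‖ ≤ ‖(inner 𝕜 (S f) f : 𝕜)‖ + ‖T - S‖ * ‖f‖ ^ 2 := by
  have hdiff : ‖(inner 𝕜 ((T - S) f) f : 𝕜)‖ ≤ ‖T - S‖ * ‖f‖ ^ 2 :=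
    calc _ ≤ ‖(T - S) f‖ * ‖f‖ := norm_inner_le_norm _ _
      _ ≤ ‖T - S‖ * ‖f‖ * ‖f‖ := by gcongr; exact (T - S).le_opNorm f
      _ = ‖T - S‖ * ‖f‖ ^ 2 := by ring
  calc ‖(inner 𝕜 (T f) f : 𝕜)‖ = ‖inner 𝕜 (S f) f + inner 𝕜 ((T - S) f) f‖ := by
        rw [← inner_add_left, sub_apply, add_sub_cancel]
    _ ≤ _ := (norm_add_le _ _).trans (by gcongr)

theorem IsCompactOperator.exists_finiteDimensional_norm_inner_le {T : E →L[𝕜] E}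
    (hT : IsCompactOperator T) {μ : ℝ} (hμ : 0 < μ) :
    ∃ V : Submodule 𝕜 E, FiniteDimensional 𝕜 V ∧
      ∀ f ∈ Vᗮ, ‖(inner 𝕜 (T f) f : 𝕜)‖ ≤ μ * ‖f‖ ^ 2 := by
  obtain ⟨t, -, htfin, hcover⟩ := exists_finite_cover_balls_of_isCompact_closure
    (hT.isCompact_closure_image_closedBall 1) hμ
  refine ⟨Submodule.span 𝕜 t, FiniteDimensional.span_of_finite 𝕜 htfin, fun f hf => ?_⟩
  rcases eq_or_ne f 0 with rfl | hf0
  · simp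
  set u := (‖f‖⁻¹ : 𝕜) • f
  have hu : u ∈ Metric.closedBall (0 : E) 1 := by
    simp [u, norm_smul, hf0]
  obtain ⟨y, hyt, hy⟩ := Set.mem_iUnion₂.mp (hcover (Set.mem_image_of_mem T hu))
  -- `‖f‖ • y ∈ span t` is orthogonal to `f`, and `T f` lies within `μ ‖f‖` of it.
  have hfu : T f = (‖f‖ : 𝕜) • T u := by
    simp [u, smul_smul, hf0]
  have horth : (inner 𝕜 ((‖f‖ : 𝕜) • y) f : 𝕜) = 0 :=
    Submodule.inner_right_of_mem_orthogonal
      (Submodule.smul_mem _ _ (Submodule.subset_span hyt)) hf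
  calc ‖(inner 𝕜 (T f) f : 𝕜)‖ = ‖(inner 𝕜 (T f - (‖f‖ : 𝕜) • y) f : 𝕜)‖ := by
        rw [inner_sub_left, horth, sub_zero]
    _ ≤ ‖T f - (‖f‖ : 𝕜) • y‖ * ‖f‖ := norm_inner_le_norm _ _
    _ = ‖f‖ * ‖T u - y‖ * ‖f‖ := by
        rw [hfu, ← smul_sub, norm_smul, RCLike.norm_ofReal, abs_norm]
    _ ≤ ‖f‖ * μ * ‖f‖ := by
        rw [Metric.mem_ball, dist_eq_norm] at hy; gcongr
    _ = μ * ‖f‖ ^ 2 := by ring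

end

theorem tendsto_mul_of_shifted_bounds {α : Type*} {L : Filter α} {f u : α → ℝ}
    {N : ℝ → α → ℝ} {l : ℝ → ℝ} {lam : ℝ} (hf0 : Tendsto f L (𝓝 0))
    (hf : ∀ᶠ z in L, 0 ≤ f z)
    (hN : ∀ᶠ μ in 𝓝 lam, Tendsto (fun z => f z * N μ z) L (𝓝 (l μ)))
    (hl : ContinuousAt l lam)
    (hbound : ∀ᶠ ε in 𝓝[>] 0, ∃ C : ℝ,
      ∀ᶠ z in L, N (lam + ε) z ≤ u z + C ∧ u z ≤ N (lam - ε) z + C) :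
    Tendsto (fun z => f z * u z) L (𝓝 (l lam)) := by
  have hplus : Tendsto (fun ε => lam + ε) (𝓝[>] 0) (𝓝 lam) :=
    ((continuous_const_add lam).tendsto' 0 lam (add_zero lam)).mono_left nhdsWithin_le_nhds
  have hminus : Tendsto (fun ε => lam - ε) (𝓝[>] 0) (𝓝 lam) :=
    ((continuous_sub_left lam).tendsto' 0 lam (sub_zero lam)).mono_left nhdsWithin_le_nhds
  refine tendsto_order.2 ⟨fun a ha => ?_, fun b hb => ?_⟩
  · obtain ⟨ε, hεa, hεN, C, hC⟩ := ((hl.tendsto.comp hplus).eventually (lt_mem_nhds ha)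
      |>.and ((hplus.eventually hN).and hbound)).exists
    have hlow : Tendsto (fun z => f z * N (lam + ε) z - f z * C) L (𝓝 (l (lam + ε))) := by
      simpa using hεN.sub (hf0.mul_const C)
    filter_upwards [hlow.eventually (lt_mem_nhds hεa), hC, hf] with z hz hzC hfz
    calc a < f z * N (lam + ε) z - f z * C := hz
      _ ≤ f z * u z := by linarith [mul_le_mul_of_nonneg_left hzC.1 hfz, mul_add (f z) (u z) C]
  · obtain ⟨ε, hεb, hεN, C, hC⟩ := ((hl.tendsto.comp hminus).eventually (gt_mem_nhds hb)
      |>.and ((hminus.eventually hN).and hbound)).exists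
    have hup : Tendsto (fun z => f z * N (lam - ε) z + f z * C) L (𝓝 (l (lam - ε))) := by
      simpa using hεN.add (hf0.mul_const C)
    filter_upwards [hup.eventually (gt_mem_nhds hεb), hC, hf] with z hz hzC hfz
    calc f z * u z ≤ f z * N (lam - ε) z + f z * C := by
          linarith [mul_le_mul_of_nonneg_left hzC.2 hfz, mul_add (f z) (N (lam - ε) z) C]
      _ < b := hz

section

variable {H : Type*} [NormedAddCommGroup H] [InnerProductSpace ℂ H]

def RayleighGT (lam : ℝ) (B : H →L[ℂ] H) (F : Submodule ℂ H) : Prop :=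
  ∀ f ∈ F, f ≠ 0 → lam * ‖f‖ ^ 2 < (inner ℂ (B f) f : ℂ).re

/-- Without this bound the `sSup` defining `ncount` would be the junk value `0`. -/
theorem IsCompactOperator.bddAbove_finrank_rayleighGT {A : H →L[ℂ] H} (hA : IsCompactOperator A)
    {lam : ℝ} (hlam : 0 < lam) :
    BddAbove {k | ∃ F : Submodule ℂ H, Module.finrank ℂ F = k ∧ RayleighGT lam A F} := by
  obtain ⟨V, hV, hAV⟩ := hA.exists_finiteDimensional_norm_inner_le hlam
  refine ⟨Module.finrank ℂ V, ?_⟩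
  rintro _ ⟨F, rfl, hF⟩
  have hbot : F ⊓ Vᗮ = ⊥ := (Submodule.eq_bot_iff _).2 fun f hf => by
    by_contra hf0
    exact ((hF f hf.1 hf0).trans_le ((Complex.re_le_norm _).trans (hAV f hf.2))).false
  have h := F.finrank_le_finrank_inf_orthogonal_add V
  rwa [hbot, finrank_bot, zero_add] at h

theorem ncount_le_ncount_add_finrank {A B : H →L[ℂ] H} (hA : IsCompactOperator A)
    {lam lam' : ℝ} (hlam' : 0 < lam') (V : Submodule ℂ H) [FiniteDimensional ℂ V]
    (hAB : ∀ f ∈ Vᗮ, lam * ‖f‖ ^ 2 < (inner ℂ (B f) f : ℂ).re →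
      lam' * ‖f‖ ^ 2 < (inner ℂ (A f) f : ℂ).re) :
    ncount lam B ≤ ncount lam' A + Module.finrank ℂ V := by
  refine csSup_le ⟨0, ⊥, finrank_bot ℂ H, fun f hf hf0 => absurd hf hf0⟩ ?_
  rintro _ ⟨F, rfl, hF⟩
  have hFV : RayleighGT lam' A (F ⊓ Vᗮ) := fun f hf hf0 => hAB f hf.2 (hF f hf.1 hf0)
  calc Module.finrank ℂ F ≤ Module.finrank ℂ ↥(F ⊓ Vᗮ) + Module.finrank ℂ V :=
        F.finrank_le_finrank_inf_orthogonal_add V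
    _ ≤ ncount lam' A + Module.finrank ℂ V :=
        Nat.add_le_add_right (le_csSup (hA.bddAbove_finrank_rayleighGT hlam') ⟨_, rfl, hFV⟩) _

theorem ncount_add_le {A P : H →L[ℂ] H} (hA : IsCompactOperator A) {lam ε : ℝ} (hε : ε < lam)
    (V : Submodule ℂ H) [FiniteDimensional ℂ V]
    (hP : ∀ f ∈ Vᗮ, ‖(inner ℂ (P f) f : ℂ)‖ ≤ ε * ‖f‖ ^ 2) :
    ncount lam (A + P) ≤ ncount (lam - ε) A + Module.finrank ℂ V := by
  refine ncount_le_ncount_add_finrank hA (sub_pos.2 hε) V fun f hf hlt => ?_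
  have hPf := (Complex.re_le_norm _).trans (hP f hf)
  rw [add_apply, inner_add_left, Complex.add_re] at hlt
  linarith

theorem le_ncount_add {A P : H →L[ℂ] H} (hAP : IsCompactOperator (A + P)) {lam ε : ℝ}
    (hlam : 0 < lam) (V : Submodule ℂ H) [FiniteDimensional ℂ V]
    (hP : ∀ f ∈ Vᗮ, ‖(inner ℂ (P f) f : ℂ)‖ ≤ ε * ‖f‖ ^ 2) :
    ncount (lam + ε) A ≤ ncount lam (A + P) + Module.finrank ℂ V := by
  have h := ncount_add_le (P := -P) hAP (lam := lam + ε) (by linarith) V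
    (by simpa only [neg_apply, inner_neg_left, norm_neg] using hP)
  rwa [add_neg_cancel_right, add_sub_cancel_right] at h

theorem exists_eventually_ncount_add_bounds {α : Type*} {L : Filter α} {A₀ A₁ : α → H →L[ℂ] H}
    {P : H →L[ℂ] H} (hP : IsCompactOperator P) (hA₁ : Tendsto A₁ L (𝓝 P))
    (hA₀ : ∀ᶠ z in L, IsCompactOperator (A₀ z))
    (hA : ∀ᶠ z in L, IsCompactOperator (A₀ z + A₁ z)) {lam ε : ℝ} (hε : 0 < ε) (hεlam : ε < lam) :
    ∃ C : ℕ, ∀ᶠ z in L, ncount (lam + ε) (A₀ z) ≤ ncount lam (A₀ z + A₁ z) + C ∧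
      ncount lam (A₀ z + A₁ z) ≤ ncount (lam - ε) (A₀ z) + C := by
  obtain ⟨V, hV, hPV⟩ := hP.exists_finiteDimensional_norm_inner_le (half_pos hε)
  refine ⟨Module.finrank ℂ V, ?_⟩
  filter_upwards [hA₁.eventually (Metric.closedBall_mem_nhds P (half_pos hε)), hA₀, hA]
    with z hz hA₀z hAz
  have hA₁z : ∀ f ∈ Vᗮ, ‖(inner ℂ (A₁ z f) f : ℂ)‖ ≤ ε * ‖f‖ ^ 2 := fun f hf => by
    rw [dist_eq_norm] at hz
    linarith [norm_inner_apply_self_le_add P (A₁ z) f, hPV f hf,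
      mul_le_mul_of_nonneg_right hz (sq_nonneg ‖f‖)]
  exact ⟨le_ncount_add hAz (hε.trans hεlam) V hA₁z, ncount_add_le hA₀z hεlam V hA₁z⟩

end

theorem counting_function_asymptotics_stable_under_compact_perturbation_general
    {H : Type*} [NormedAddCommGroup H] [InnerProductSpace ℂ H]
    (m : ℝ) (A₀ A₁ : ℝ → H →L[ℂ] H)
    (h₀cpt : ∀ z < m, IsCompactOperator (A₀ z))
    (h₁cpt : ∀ z ≤ m, IsCompactOperator (A₁ z))
    (h₁cont : ContinuousOn A₁ (Set.Iic m))
    (f : ℝ → ℝ) (hfpos : ∀ z < m, 0 < f z)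
    (hf0 : Tendsto f (𝓝[<] m) (𝓝 0))
    (l : ℝ → ℝ) (hl : ContinuousOn l (Set.Ioi 0))
    (hlim : ∀ lam > (0 : ℝ),
      Tendsto (fun z => f z * (ncount lam (A₀ z) : ℝ)) (𝓝[<] m) (𝓝 (l lam))) :
    ∀ lam > (0 : ℝ),
      Tendsto (fun z => f z * (ncount lam (A₀ z + A₁ z) : ℝ)) (𝓝[<] m) (𝓝 (l lam)) := by
  intro lam hlam
  have hA₁ : Tendsto A₁ (𝓝[<] m) (𝓝 (A₁ m)) :=
    (h₁cont m Set.self_mem_Iic).mono_left (nhdsWithin_mono m Set.Iio_subset_Iic_self)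
  have hA₀ : ∀ᶠ z in 𝓝[<] m, IsCompactOperator (A₀ z) :=
    eventually_nhdsWithin_of_forall h₀cpt
  have hA : ∀ᶠ z in 𝓝[<] m, IsCompactOperator (A₀ z + A₁ z) :=
    eventually_nhdsWithin_of_forall fun z hz => (h₀cpt z hz).add (h₁cpt z hz.le)
  refine tendsto_mul_of_shifted_bounds hf0
    (eventually_nhdsWithin_of_forall fun z hz => (hfpos z hz).le)
    (eventually_of_mem (Ioi_mem_nhds hlam) hlim) (hl.continuousAt (Ioi_mem_nhds hlam)) ?_
  filter_upwards [Ioo_mem_nhdsGT hlam] with ε hε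
  obtain ⟨C, hC⟩ := exists_eventually_ncount_add_bounds (h₁cpt m le_rfl) hA₁ hA₀ hA hε.1 hε.2
  exact ⟨C, hC.mono fun z hz => ⟨by exact_mod_cast hz.1, by exact_mod_cast hz.2⟩⟩

/-- Compact perturbations continuous up to the threshold do not change the asymptotics of
the counting function `n(λ, ·)`. -/
theorem counting_function_asymptotics_stable_under_compact_perturbation
    {H : Type*} [NormedAddCommGroup H] [InnerProductSpace ℂ H] [CompleteSpace H]
    (m : ℝ) (A₀ A₁ : ℝ → H →L[ℂ] H)
    (h₀cpt : ∀ z < m, IsCompactOperator (A₀ z))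
    (h₀sa : ∀ z < m, IsSelfAdjoint (A₀ z))
    (h₁cpt : ∀ z ≤ m, IsCompactOperator (A₁ z))
    (h₁sa : ∀ z ≤ m, IsSelfAdjoint (A₁ z))
    (h₀cont : ContinuousOn A₀ (Set.Iio m))
    (h₁cont : ContinuousOn A₁ (Set.Iic m))
    (f : ℝ → ℝ) (hfpos : ∀ z < m, 0 < f z)
    (hf0 : Tendsto f (𝓝[<] m) (𝓝 0))
    (l : ℝ → ℝ) (hl : ContinuousOn l (Set.Ioi 0))
    (hlim : ∀ lam > (0 : ℝ),
      Tendsto (fun z => f z * (ncount lam (A₀ z) : ℝ)) (𝓝[<] m) (𝓝 (l lam))) :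
    ∀ lam > (0 : ℝ),
      Tendsto (fun z => f z * (ncount lam (A₀ z + A₁ z) : ℝ)) (𝓝[<] m) (𝓝 (l lam)) :=
  counting_function_asymptotics_stable_under_compact_perturbation_general m A₀ A₁ h₀cpt h₁cpt h₁cont
    f hfpos hf0 l hl hlim
end
end
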